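/- arXiv:2105.08013 — 3 statements merged into one kernel-verified Lean document; each statement's English description precedes it below -/
import Mathlib

section
/- Suppose variable j is independent of the remaining variables under the empirical distribution, i.e., p(z) = p_{{j}}(z_j) · p_{{1,…,d}∖{j}}(z_{−j}) for all z ∈ 𝒳. Then for every subject t and every u ⊆ {1,…,d}∖{j}, N_t(u∪{j}) / N_t(u) = p_{{j}}(x_{tj}), and consequently φ_{t,j} = −log₂ p_{{j}}(x_{tj}). -/
open Finset

variable {n d : ℕ} {X : Fin d → Type} [∀ j, Fintype (X j)] [∀ j, DecidableEq (X j)]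

/-- Number of subjects matching subject `t` on every variable in `u`. -/
def cohortN (x : Fin n → ∀ j, X j) (t : Fin n) (u : Finset (Fin d)) : ℕ :=
  (Finset.univ.filter fun i => ∀ j ∈ u, x i j = x t j).card

/-- Value function `val_t(u) = -log₂(N_t(u)/n)`. -/
noncomputable def uVal (x : Fin n → ∀ j, X j) (t : Fin n) (u : Finset (Fin d)) : ℝ :=
  -Real.logb 2 ((cohortN x t u : ℝ) / n)

/-- Uniqueness Shapley value of variable `j` for subject `t`. -/
noncomputable def uShap (x : Fin n → ∀ j, X j) (t : Fin n) (j : Fin d) : ℝ :=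
  (d : ℝ)⁻¹ * ∑ u ∈ ((Finset.univ : Finset (Fin d)).erase j).powerset,
    ((d - 1).choose u.card : ℝ)⁻¹ * (uVal x t (insert j u) - uVal x t u)

/-- Global uniqueness Shapley value. -/
noncomputable def uShapGlobal (x : Fin n → ∀ j, X j) (j : Fin d) : ℝ :=
  (n : ℝ)⁻¹ * ∑ t, uShap x t j

/-- Marginal empirical probability of observing `z` on the variables in `u`. -/
noncomputable def margP (x : Fin n → ∀ j, X j) (u : Finset (Fin d))
    (z : ∀ j : u, X j.1) : ℝ :=
  ((Finset.univ.filter fun i : Fin n => ∀ j : u, x i j.1 = z j).card : ℝ) / n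

/-- Empirical entropy of the variables in `u` (convention `0·log₂ 0 = 0` holds automatically). -/
noncomputable def emEnt (x : Fin n → ∀ j, X j) (u : Finset (Fin d)) : ℝ :=
  -∑ z : (∀ j : u, X j.1), margP x u z * Real.logb 2 (margP x u z)

/-! Summing the atom identity `n · #{x_i = z} = #{x_ij = z_j} · #{x_{i,-j} = z_{-j}}` over `z`
extends it to "rectangles" `{x_ij ∈ B ∧ x_{i,-j} ∈ C}`. For `j ∉ u` the cohort of `x_t` on
`u ∪ {j}` is such a rectangle, so `n · N_t(u ∪ {j}) = N_t({j}) · N_t(u)`. Hence every marginal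
contribution `val_t(u ∪ {j}) - val_t(u)` equals `-log₂ p_{j}(x_tj)`, and the Shapley weights sum
to one. -/

section Independence
variable {ι β γ : Type*} [Fintype ι] [DecidableEq β] [DecidableEq γ]

theorem card_mul_card_filter_and_of_indep {N : ℕ} {f : ι → β} {g : ι → γ}
    (hfg : ∀ b c, N * #{i | f i = b ∧ g i = c} = #{i | f i = b} * #{i | g i = c})
    (P : β → Prop) (Q : γ → Prop) [DecidablePred P] [DecidablePred Q] :
    N * #{i | P (f i) ∧ Q (g i)} = #{i | P (f i)} * #{i | Q (g i)} := by
  set B := {b ∈ univ.image f | P b}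
  set C := {c ∈ univ.image g | Q c}
  have hB : ∀ i, P (f i) ↔ f i ∈ B := by simp [B]
  have hC : ∀ i, Q (g i) ↔ g i ∈ C := by simp [C]
  have hfiber : #{i | f i ∈ B ∧ g i ∈ C} = ∑ b ∈ B, ∑ c ∈ C, #{i | f i = b ∧ g i = c} := by
    simp_rw [← Prod.mk.injEq, ← sum_product (f := fun p : β × γ => #{i | (f i, g i) = p}),
      sum_card_fiberwise_eq_card_filter, mem_product]
  simp only [hB, hC]
  rw [hfiber, mul_sum, ← sum_card_fiberwise_eq_card_filter, ← sum_card_fiberwise_eq_card_filter,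
    sum_mul_sum]
  simp only [mul_sum, hfg]

end Independence

theorem sum_powerset_inv_choose_card {α : Type*} (s : Finset α) :
    ∑ u ∈ s.powerset, ((#s).choose #u : ℝ)⁻¹ = #s + 1 := by
  rw [sum_powerset_apply_card (fun m => ((#s).choose m : ℝ)⁻¹)]
  have hterm : ∀ m ∈ range (#s + 1), (#s).choose m • ((#s).choose m : ℝ)⁻¹ = 1 := fun m hm => by
    rw [nsmul_eq_mul, mul_inv_cancel₀]
    exact_mod_cast (Nat.choose_pos (Nat.lt_succ_iff.1 (mem_range.1 hm))).ne'
  rw [sum_congr rfl hterm, sum_const, card_range, nsmul_one, Nat.cast_succ]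

section Cohort

variable {n d : ℕ} {X : Fin d → Type} [∀ j, DecidableEq (X j)]

theorem cohortN_pos (x : Fin n → ∀ j, X j) (t : Fin n) (u : Finset (Fin d)) :
    0 < cohortN x t u :=
  card_pos.2 ⟨t, by simp⟩

theorem margP_restrict (x : Fin n → ∀ j, X j) (u : Finset (Fin d)) (z : ∀ j, X j) :
    margP x u (fun k => z k.1) = #{i | ∀ k ∈ u, x i k = z k} / n := by
  simp [margP, Subtype.forall]

theorem margP_restrict_self (x : Fin n → ∀ j, X j) (t : Fin n) (u : Finset (Fin d)) :
    margP x u (fun k => x t k.1) = cohortN x t u / n :=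
  margP_restrict x u (x t)

theorem uVal_sub_uVal (x : Fin n → ∀ j, X j) (t : Fin n) (u v : Finset (Fin d)) :
    uVal x t v - uVal x t u = -Real.logb 2 (cohortN x t v / cohortN x t u) := by
  have hn : (n : ℝ) ≠ 0 := by exact_mod_cast (Fin.pos t).ne'
  have hv : (cohortN x t v : ℝ) ≠ 0 := by exact_mod_cast (cohortN_pos x t v).ne'
  have hu : (cohortN x t u : ℝ) ≠ 0 := by exact_mod_cast (cohortN_pos x t u).ne'
  rw [uVal, uVal, Real.logb_div hv hu, Real.logb_div hv hn, Real.logb_div hu hn]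
  ring

theorem uShap_eq_of_forall_uVal_sub_eq (x : Fin n → ∀ j, X j) (t : Fin n) (j : Fin d) {c : ℝ}
    (h : ∀ u ⊆ univ.erase j, uVal x t (insert j u) - uVal x t u = c) : uShap x t j = c := by
  have hcard : #(univ.erase j) = d - 1 := by simp
  have hd : #(univ.erase j) + 1 = d := by rw [hcard]; exact Nat.sub_add_cancel (Fin.pos j)
  rw [uShap, sum_congr rfl fun u hu => by rw [h u (mem_powerset.1 hu)], ← sum_mul, ← hcard,
    sum_powerset_inv_choose_card, ← Nat.cast_add_one, hd,
    inv_mul_cancel_left₀ (by simp [(Fin.pos j).ne'])]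

theorem card_mul_card_filter_eq_and_eq_of_indep (x : Fin n → ∀ j, X j) (j : Fin d) (hn : n ≠ 0)
    (hindep : ∀ z : ∀ j, X j,
      margP x univ (fun k => z k.1)
        = margP x {j} (fun k => z k.1) * margP x (univ.erase j) (fun k => z k.1))
    (b : X j) (c : ∀ k : {k // k ≠ j}, X k) :
    n * #{i | x i j = b ∧ (fun k : {k // k ≠ j} => x i k) = c}
      = #{i | x i j = b} * #{i | (fun k : {k // k ≠ j} => x i k) = c} := by
  set z := (Equiv.piSplitAt j X).symm (b, c)
  have hz : Equiv.piSplitAt j X z = (b, c) := Equiv.apply_symm_apply _ _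
  have hsplit : ∀ i, x i j = b ∧ (fun k : {k // k ≠ j} => x i k) = c ↔ ∀ k, x i k = z k := by
    intro i
    rw [← funext_iff, ← Prod.mk.injEq]
    exact (Equiv.piSplitAt j X).eq_symm_apply.symm
  have h := hindep z
  simp only [Equiv.piSplitAt_apply, Prod.mk.injEq] at hz
  rw [filter_congr fun i _ => hsplit i, mul_comm]
  simp only [← hz.1, ← hz.2, funext_iff, Subtype.forall]
  simp only [margP_restrict, mem_univ, true_implies, mem_singleton, forall_eq, mem_erase, ne_eq,
    and_true] at h
  field_simp at h
  exact_mod_cast h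

theorem card_mul_cohortN_insert_of_indep (x : Fin n → ∀ j, X j) (j : Fin d)
    (hindep : ∀ z : ∀ j, X j,
      margP x univ (fun k => z k.1)
        = margP x {j} (fun k => z k.1) * margP x (univ.erase j) (fun k => z k.1))
    (t : Fin n) {u : Finset (Fin d)} (hu : u ⊆ univ.erase j) :
    n * cohortN x t (insert j u) = cohortN x t {j} * cohortN x t u := by
  have hrect := card_mul_card_filter_and_of_indep (f := fun i => x i j)
    (g := fun i (k : {k // k ≠ j}) => x i k)
    (card_mul_card_filter_eq_and_eq_of_indep x j (Fin.pos t).ne' hindep) (· = x t j)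
    (fun c => ∀ k : {k // k ≠ j}, k.1 ∈ u → c k = x t k)
  have hrest : ∀ i, (∀ k : {k // k ≠ j}, k.1 ∈ u → x i k = x t k) ↔ ∀ k ∈ u, x i k = x t k :=
    fun i => ⟨fun h k hk => h ⟨k, (mem_erase.1 (hu hk)).1⟩ hk, fun h k hk => h k hk⟩
  simp only [hrest] at hrect
  simpa [cohortN] using hrect

end Cohort

theorem uniquenessShapley_of_indep_general
    (n d : ℕ)
    (X : Fin d → Type) [∀ j, DecidableEq (X j)]
    (x : Fin n → ∀ j, X j) (j : Fin d)
    (hindep : ∀ z : ∀ j, X j,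
      margP x Finset.univ (fun k => z k.1)
        = margP x {j} (fun k => z k.1) * margP x (Finset.univ.erase j) (fun k => z k.1)) :
    ∀ t : Fin n,
      (∀ u ⊆ (Finset.univ : Finset (Fin d)).erase j,
        (cohortN x t (insert j u) : ℝ) / (cohortN x t u : ℝ)
          = margP x {j} (fun k => x t k.1)) ∧
      uShap x t j = -Real.logb 2 (margP x {j} (fun k => x t k.1)) := by
  intro t
  have hratio : ∀ u ⊆ univ.erase j,
      (cohortN x t (insert j u) : ℝ) / cohortN x t u = margP x {j} (fun k => x t k.1) := by
    intro u hu
    have hn : (n : ℝ) ≠ 0 := by exact_mod_cast (Fin.pos t).ne'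
    have hu0 : (cohortN x t u : ℝ) ≠ 0 := by exact_mod_cast (cohortN_pos x t u).ne'
    rw [margP_restrict_self, div_eq_div_iff hu0 hn, mul_comm]
    exact_mod_cast card_mul_cohortN_insert_of_indep x j hindep t hu
  refine ⟨hratio, uShap_eq_of_forall_uVal_sub_eq x t j fun u hu => ?_⟩
  rw [uVal_sub_uVal, hratio u hu]

/-- if variable `j` is independent of the remaining variables under the
empirical distribution, then for every subject `t` and every `u ⊆ {1,…,d}∖{j}` the cohort
ratio `N_t(u∪{j})/N_t(u)` equals `p_{{j}}(x_{tj})`, and `φ_{t,j} = -log₂ p_{{j}}(x_{tj})`. -/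
theorem uniquenessShapley_of_indep
    (n d : ℕ) (hn : 1 ≤ n) (hd : 1 ≤ d)
    (X : Fin d → Type) [∀ j, Fintype (X j)] [∀ j, DecidableEq (X j)]
    (x : Fin n → ∀ j, X j) (j : Fin d)
    (hindep : ∀ z : ∀ j, X j,
      margP x Finset.univ (fun k => z k.1)
        = margP x {j} (fun k => z k.1) * margP x (Finset.univ.erase j) (fun k => z k.1)) :
    ∀ t : Fin n,
      (∀ u ⊆ (Finset.univ : Finset (Fin d)).erase j,
        (cohortN x t (insert j u) : ℝ) / (cohortN x t u : ℝ)
          = margP x {j} (fun k => x t k.1)) ∧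
      uShap x t j = -Real.logb 2 (margP x {j} (fun k => x t k.1)) :=
  uniquenessShapley_of_indep_general n d X x j hindep
end

section
/- If d = 2, then the global uniqueness Shapley value of variable 1 satisfies φ^{1:n}_1 = (1/2)·𝓗({1}) + (1/2)·𝓗({1}|{2}). -/
/-!
Since `N_t(u) / n` is the empirical probability `p_u` of the values of subject `t` on `u`,
averaging `val_t(u) = -log₂ p_u(x_t)` over the subjects gives the entropy `𝓗(u)`. The Shapley
value is linear in the value function, so `φ^{1:n}_j` is the Shapley value of the game
`u ↦ 𝓗(u)`. For `d = 2` the coalitions avoiding the first variable are `∅` and `{2}`, each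
with weight `1/2`, and `𝓗(∅) = 0`.
-/

open Finset

variable {n d : ℕ} {X : Fin d → Type} [∀ j, Fintype (X j)] [∀ j, DecidableEq (X j)]

theorem inv_mul_sum_uVal_eq_emEnt (x : Fin n → ∀ j, X j) (u : Finset (Fin d)) :
    (n : ℝ)⁻¹ * ∑ t, uVal x t u = emEnt x u := by
  set r : Fin n → ∀ j : u, X j.1 := fun t j => x t j.1
  have cohortN_div : ∀ t, (cohortN x t u : ℝ) / n = margP x u (r t) := by
    simp [cohortN, margP, r]
  have margP_eq : ∀ z, margP x u z = (#{t | r t = z} : ℝ) / n := by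
    simp [margP, r, funext_iff]
  let surprisal : (∀ j : u, X j.1) → ℝ := fun z => -Real.logb 2 (margP x u z)
  calc (n : ℝ)⁻¹ * ∑ t, uVal x t u
      = (n : ℝ)⁻¹ * ∑ t, surprisal (r t) := by simp only [uVal, cohortN_div, surprisal]
    _ = (n : ℝ)⁻¹ * ∑ z, (#{t | r t = z} : ℝ) * surprisal z := by
        rw [← sum_fiberwise' univ r surprisal]
        simp only [sum_const, nsmul_eq_mul]
    _ = emEnt x u := by
        simp only [emEnt, margP_eq, surprisal, mul_sum, ← sum_neg_distrib]
        refine sum_congr rfl fun z _ => ?_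
        ring

theorem uShapGlobal_eq_shapley_emEnt (x : Fin n → ∀ j, X j) (j : Fin d) :
    uShapGlobal x j = (d : ℝ)⁻¹ * ∑ u ∈ (univ.erase j).powerset,
      ((d - 1).choose #u : ℝ)⁻¹ * (emEnt x (insert j u) - emEnt x u) := by
  simp only [uShapGlobal, uShap, ← inv_mul_sum_uVal_eq_emEnt, mul_sum, mul_sub]
  rw [sum_comm]
  simp only [← sum_sub_distrib]
  refine sum_congr rfl fun u _ => sum_congr rfl fun t _ => ?_
  ring

lemma emEnt_empty (x : Fin n → ∀ j, X j) : emEnt x ∅ = 0 := by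
  rcases Nat.eq_zero_or_pos n with rfl | hn
  · simp [emEnt, margP]
  · simp [emEnt, margP, hn.ne']

theorem globalUniquenessShapley_two_vars_general
    (n : ℕ)
    (X : Fin 2 → Type) [∀ j, Fintype (X j)] [∀ j, DecidableEq (X j)]
    (x : Fin n → ∀ j, X j) :
    uShapGlobal x 0
      = (1 / 2) * emEnt x {0} + (1 / 2) * (emEnt x {0, 1} - emEnt x {1}) := by
  have hcoalitions : (univ.erase (0 : Fin 2)).powerset = {∅, {1}} := by decide
  rw [uShapGlobal_eq_shapley_emEnt, hcoalitions, sum_pair (by decide), insert_empty,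
    emEnt_empty]
  norm_num
  ring

/-- for `d = 2`, the global uniqueness Shapley value of the first variable is
`φ^{1:n}_1 = (1/2)𝓗({1}) + (1/2)𝓗({1}|{2})` (variables `1,2` are indices `0,1 : Fin 2`). -/
theorem globalUniquenessShapley_two_vars
    (n : ℕ) (hn : 1 ≤ n)
    (X : Fin 2 → Type) [∀ j, Fintype (X j)] [∀ j, DecidableEq (X j)]
    (x : Fin n → ∀ j, X j) :
    uShapGlobal x 0
      = (1 / 2) * emEnt x {0} + (1 / 2) * (emEnt x {0, 1} - emEnt x {1}) :=
  globalUniquenessShapley_two_vars_general n X x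
end

section
/- If some variable j₀ ∈ {1,…,d} is a database key, i.e., x_{ij₀} = x_{tj₀} implies i = t, then N_t(u) = 1 for every subject t and every subset u ⊆ {1,…,d} containing j₀, and consequently Σ_{j=1}^d φ_{t,j} = log₂ n for every subject t. -/
/-! A key variable makes every cohort containing it a singleton, so `val_t` is `log₂ n` on the
full set of variables and `0` on the empty one, and the claim becomes the efficiency of Shapley
values, `∑ⱼ φⱼ = v univ - v ∅`. Regrouping that double sum by the coalition `s`, the value
`v s` gets the weight `|s| / (d C(d-1, |s|-1)) - (d - |s|) / (d C(d-1, |s|))`; both terms equal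
`1 / C(d, |s|)`, except that the first vanishes at `s = ∅` and the second at `s = univ`. -/

open Finset

variable {n d : ℕ} {X : Fin d → Type} [∀ j, Fintype (X j)] [∀ j, DecidableEq (X j)]

section
variable {K : Type*} [Field K] [CharZero K]

theorem natCast_mul_inv_mul_inv_of_mul_eq {a b c m : ℕ} (h : a * b = c * m) (hm : m ≠ 0) :
    (m : K) * ((a : K)⁻¹ * (b : K)⁻¹) = (c : K)⁻¹ := by
  rw [← mul_inv, ← Nat.cast_mul, h, Nat.cast_mul, mul_inv, mul_left_comm,
    mul_inv_cancel₀ (Nat.cast_ne_zero.mpr hm), mul_one]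

theorem card_mul_inv_choose_pred (D k : ℕ) :
    (k : K) * ((D : K)⁻¹ * ((D - 1).choose (k - 1) : K)⁻¹)
      = ((D.choose k : ℕ) : K)⁻¹ - if k = 0 then 1 else 0 := by
  rcases k with _ | k
  · simp
  rcases D with _ | D
  · simp
  simpa using natCast_mul_inv_mul_inv_of_mul_eq (K := K) (Nat.add_one_mul_choose_eq D k)
    k.succ_ne_zero

theorem sub_mul_inv_choose (D k : ℕ) :
    ((D - k : ℕ) : K) * ((D : K)⁻¹ * ((D - 1).choose k : K)⁻¹)
      = ((D.choose k : ℕ) : K)⁻¹ - if k = D then 1 else 0 := by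
  rcases Nat.lt_trichotomy k D with hk | rfl | hk
  · obtain ⟨D, rfl⟩ : ∃ D', D = D' + 1 := ⟨D - 1, by omega⟩
    rw [if_neg hk.ne, sub_zero]
    simpa using natCast_mul_inv_mul_inv_of_mul_eq (K := K)
      ((mul_comm _ _).trans (Nat.choose_mul_succ_eq D k)) (by omega)
  · simp
  · simp [Nat.choose_eq_zero_of_lt hk, Nat.sub_eq_zero_of_le hk.le, hk.ne']
end

section
variable {ι M : Type*} [Fintype ι] [DecidableEq ι] [AddCommMonoid M]

theorem sum_sum_powerset_erase (f : Finset ι → M) :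
    ∑ j, ∑ u ∈ (univ.erase j).powerset, f u =
      ∑ s : Finset ι, (Fintype.card ι - #s) • f s := by
  rw [sum_comm' (t' := univ) (s' := fun s => sᶜ) (by intro j s; simp [subset_erase])]
  simp [card_compl]

theorem sum_powerset_erase_insert (j : ι) (f : Finset ι → M) :
    ∑ u ∈ (univ.erase j).powerset, f (insert j u) = ∑ s with j ∈ s, f s := by
  apply sum_nbij' (insert j) (erase · j) <;> intro u hu <;> simp_all [subset_erase]

theorem sum_sum_powerset_erase_insert (f : Finset ι → M) :
    ∑ j, ∑ u ∈ (univ.erase j).powerset, f (insert j u) = ∑ s : Finset ι, #s • f s := by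
  simp_rw [sum_powerset_erase_insert]
  rw [sum_comm' (t' := univ) (s' := id) (by intro j s; simp)]
  simp
end

section
variable {ι K : Type*} [Fintype ι] [DecidableEq ι] [Field K] [CharZero K]

def shapleyValue (v : Finset ι → K) (j : ι) : K :=
  (Fintype.card ι : K)⁻¹ * ∑ u ∈ (univ.erase j).powerset,
    ((Fintype.card ι - 1).choose #u : K)⁻¹ * (v (insert j u) - v u)

theorem sum_shapleyValue (v : Finset ι → K) : ∑ j, shapleyValue v j = v univ - v ∅ := by
  unfold shapleyValue
  set D := Fintype.card ι
  set w : ℕ → K := fun k => (D : K)⁻¹ * ((D - 1).choose k : K)⁻¹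
  have hins : ∀ j, ∑ u ∈ (univ.erase j).powerset, w #u * v (insert j u)
      = ∑ u ∈ (univ.erase j).powerset, w (#(insert j u) - 1) * v (insert j u) := fun j =>
    sum_congr rfl fun u hu => by
      rw [card_insert_of_notMem fun h => notMem_erase j _ (mem_powerset.mp hu h),
        Nat.add_sub_cancel]
  calc ∑ j, (D : K)⁻¹ * ∑ u ∈ (univ.erase j).powerset,
        ((D - 1).choose #u : K)⁻¹ * (v (insert j u) - v u)
      = ∑ j, ∑ u ∈ (univ.erase j).powerset, w #u * v (insert j u)
        - ∑ j, ∑ u ∈ (univ.erase j).powerset, w #u * v u := by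
        simp only [w, mul_sum, ← sum_sub_distrib, mul_sub, mul_assoc]
    _ = ∑ s : Finset ι, (((D.choose #s : ℕ) : K)⁻¹ * v s - if s = ∅ then v s else 0)
        - ∑ s : Finset ι,
            (((D.choose #s : ℕ) : K)⁻¹ * v s - if s = univ then v s else 0) := by
        rw [sum_congr rfl fun j _ => hins j,
          sum_sum_powerset_erase_insert fun s => w (#s - 1) * v s,
          sum_sum_powerset_erase fun s => w #s * v s]
        congr 1 <;> refine sum_congr rfl fun s _ => ?_
        · rw [nsmul_eq_mul, ← mul_assoc, card_mul_inv_choose_pred]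
          simp [card_eq_zero, sub_mul]
        · rw [nsmul_eq_mul, ← mul_assoc, sub_mul_inv_choose]
          simp [D, card_eq_iff_eq_univ, sub_mul]
    _ = v univ - v ∅ := by
        simp only [sum_sub_distrib, sum_ite_eq', mem_univ, if_true]
        ring
end

section
omit [∀ j, Fintype (X j)]
variable (x : Fin n → ∀ j, X j) (t : Fin n)

theorem cohortN_empty : cohortN x t ∅ = n := by
  simp [cohortN]

theorem cohortN_eq_one_of_injective {j₀ : Fin d} (hkey : Function.Injective fun i => x i j₀)
    {u : Finset (Fin d)} (hj : j₀ ∈ u) : cohortN x t u = 1 :=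
  card_eq_one.mpr ⟨t, by
    ext i
    simpa using ⟨fun h => hkey (h j₀ hj), by rintro rfl; simp⟩⟩

theorem uVal_empty : uVal x t ∅ = 0 := by
  simp [uVal, cohortN_empty, t.pos.ne']

theorem uVal_eq_logb_of_cohortN_eq_one {u : Finset (Fin d)} (h : cohortN x t u = 1) :
    uVal x t u = Real.logb 2 n := by
  simp [uVal, h, Real.logb_inv]

theorem uShap_eq_shapleyValue (j : Fin d) : uShap x t j = shapleyValue (uVal x t) j := by
  simp only [uShap, shapleyValue, Fintype.card_fin]

end

theorem uniquenessShapley_key_variable_general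
    (n d : ℕ)
    (X : Fin d → Type) [∀ j, DecidableEq (X j)]
    (x : Fin n → ∀ j, X j) (j₀ : Fin d)
    (hkey : ∀ i t : Fin n, x i j₀ = x t j₀ → i = t) :
    (∀ (t : Fin n) (u : Finset (Fin d)), j₀ ∈ u → cohortN x t u = 1) ∧
    (∀ t : Fin n, ∑ j : Fin d, uShap x t j = Real.logb 2 n) := by
  have hcohort (t : Fin n) {u : Finset (Fin d)} (hj : j₀ ∈ u) : cohortN x t u = 1 :=
    cohortN_eq_one_of_injective x t hkey hj
  refine ⟨fun t u => hcohort t, fun t => ?_⟩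
  simp only [uShap_eq_shapleyValue, sum_shapleyValue]
  rw [uVal_eq_logb_of_cohortN_eq_one x t (hcohort t (mem_univ j₀)), uVal_empty, sub_zero]

/-- if variable `j₀` is a database key (`x_{ij₀} = x_{tj₀}` implies `i = t`),
then `N_t(u) = 1` whenever `j₀ ∈ u`, and the uniqueness Shapley values of every subject
sum to `log₂ n`. -/
theorem uniquenessShapley_key_variable
    (n d : ℕ) (hn : 1 ≤ n) (hd : 1 ≤ d)
    (X : Fin d → Type) [∀ j, Fintype (X j)] [∀ j, DecidableEq (X j)]
    (x : Fin n → ∀ j, X j) (j₀ : Fin d)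
    (hkey : ∀ i t : Fin n, x i j₀ = x t j₀ → i = t) :
    (∀ (t : Fin n) (u : Finset (Fin d)), j₀ ∈ u → cohortN x t u = 1) ∧
    (∀ t : Fin n, ∑ j : Fin d, uShap x t j = Real.logb 2 n) :=
  uniquenessShapley_key_variable_general n d X x j₀ hkey
end
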